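/- Let X_1 = X_2 = X_3 = {0,1}, let ~ be the simple staging over the order (X_1, X_2, X_3) with singleton depth-1 stages and all depth-2 vertices in one stage, and let ~' be the staging over the order (X_1, X_3, X_2) with all depth-1 vertices in one stage and depth-2 vertices (x_1, x_3) staged by the value of x_1. Then the induced models of joint distributions of (X_1, X_2, X_3) of ~ and ~' coincide; however, the models of their simplifications differ: the position staging ≈ of ~ satisfies M(≈) = M(~) (the set of strictly positive P with X_3 independent of (X_1, X_2)), while the position staging ≈' of ~' induces the model of strictly positive P with X_2 independent of X_3 given X_1, which strictly contains M(~). Hence two equivalent staged trees can have non-equivalent simplified staged trees (Remark 2). -/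

import Mathlib

/-!
Encoding: joint probability mass functions of three binary variables are
real-valued functions on `Fin 3 → Bool`.  For a given variable order, a
depth-(i-1) vertex (context) is represented by a full assignment (in that order)
of which only the coordinates `k < i` are relevant.
-/

/-- `v` and `w` agree on all coordinates below `i`. -/
def agreeBelow (i : Fin 3) (v w : Fin 3 → Bool) : Prop :=
  ∀ k : Fin 3, k < i → v k = w k

/-- Two depth-(i-1) vertices are in the same position: `(v,z) ~_j (w,z)` for every
`j ∈ {i,…,p}` and every suffix `z`.  The family `samePos rel` is the position
staging (the simplification) of the staging `rel`. -/
def samePos (rel : Fin 3 → (Fin 3 → Bool) → (Fin 3 → Bool) → Prop)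
    (i : Fin 3) (v w : Fin 3 → Bool) : Prop :=
  ∀ j : Fin 3, i ≤ j → ∀ v' w' : Fin 3 → Bool,
    agreeBelow i v' v → agreeBelow i w' w →
    (∀ k : Fin 3, i ≤ k → k < j → v' k = w' k) → rel j v' w'

/-- The staged tree model `M(~)` of a staging given by the stage relations `rel`:
strictly positive pmfs factorizing with conditional pmfs `y` constant on stages. -/
def memModel (rel : Fin 3 → (Fin 3 → Bool) → (Fin 3 → Bool) → Prop)
    (P : (Fin 3 → Bool) → ℝ) : Prop :=
  (∀ x, 0 < P x) ∧ (∑ x, P x = 1) ∧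
    ∃ y : Fin 3 → (Fin 3 → Bool) → Bool → ℝ,
      (∀ i v x, 0 < y i v x) ∧
      (∀ i v, ∑ x, y i v x = 1) ∧
      (∀ i v w, rel i v w → y i v = y i w) ∧
      (∀ x, P x = ∏ i, y i x (x i))

/-- The staging `~` over the order `(X_1, X_2, X_3)`: the two depth-1 vertices are
in different stages and all four depth-2 vertices form a single stage. -/
def relA : Fin 3 → (Fin 3 → Bool) → (Fin 3 → Bool) → Prop :=
  fun i v w => i = 1 → v 0 = w 0

/-- The staging `~'` over the order `(X_1, X_3, X_2)` (coordinates `(x_1, x_3, x_2)`):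
the two depth-1 vertices form a single stage, and the four depth-2 vertices
`(x_1, x_3)` are staged according to the value of `x_1`. -/
def relB : Fin 3 → (Fin 3 → Bool) → (Fin 3 → Bool) → Prop :=
  fun i v w => i = 2 → v 0 = w 0

/-- `X_2` is independent of `X_3` given `X_1` (for strictly positive pmfs `P` on
`{0,1}³` in the original coordinates `(x_1, x_2, x_3)`):
`P(x_1,x_2,x_3) · P(x_1) = P(x_1,x_2) · P(x_1,x_3)`. -/
def condIndep23given1 (P : (Fin 3 → Bool) → ℝ) : Prop :=
  (∀ x, 0 < P x) ∧ (∑ x, P x = 1) ∧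
    ∀ v : Fin 3 → Bool,
      P v * (∑ b : Bool, ∑ c : Bool, P ![v 0, b, c]) =
        (∑ c : Bool, P ![v 0, v 1, c]) * (∑ b : Bool, P ![v 0, b, v 2])


/-!
Both `~` in the order `(X_1, X_2, X_3)` and `~'` in the order `(X_1, X_3, X_2)` let every
conditional depend on the past only through `x_1`, or not at all. The model of such a staging
consists of the products `P(x) = ∏ᵢ yᵢ(x_1, xᵢ)`, which do not see the order of `X_2, X_3`;
hence `M(~) = M(~')`, both being `X_3 ⫫ (X_1, X_2)`. Two vertices are in the same position only
if all their descendants share stages: in `~'` the conditional of the last variable `X_2`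
depends on `x_1`, so in `≈'` that of `X_3` does too, and `M(≈')` is `X_2 ⫫ X_3 | X_1`, whereas
`~` is already simple. A distribution in which `X_3` copies `X_1` with probability `3/4`,
independently of `X_2`, separates the two models.
-/

theorem samePos.rel {rel : Fin 3 → (Fin 3 → Bool) → (Fin 3 → Bool) → Prop} {i : Fin 3}
    {v w : Fin 3 → Bool} (h : samePos rel i v w) : rel i v w :=
  h i le_rfl v w (fun _ _ => rfl) (fun _ _ => rfl) fun _ hik hki =>
    absurd (hik.trans_lt hki) (lt_irrefl _)

theorem memModel_samePos {rel : Fin 3 → (Fin 3 → Bool) → (Fin 3 → Bool) → Prop}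
    {P : (Fin 3 → Bool) → ℝ} (h : memModel rel P) : memModel (samePos rel) P := by
  obtain ⟨hpos, hsum, y, ypos, ysum, yconst, yfac⟩ := h
  exact ⟨hpos, hsum, y, ypos, ysum, fun i v w hvw => yconst i v w hvw.rel, yfac⟩

/-- The staging in which the conditional of coordinate `i ∈ S` depends on the past only through
`x_1`, and that of `i ∉ S` not at all. -/
def stagingByFirst (S : Set (Fin 3)) : Fin 3 → (Fin 3 → Bool) → (Fin 3 → Bool) → Prop :=
  fun i v w => i ∈ S → v 0 = w 0

theorem samePos_stagingByFirst {S : Set (Fin 3)} (hS : 0 ∉ S) :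
    samePos (stagingByFirst S) = stagingByFirst {i | i ≠ 0 ∧ ∃ j ∈ S, i ≤ j} := by
  funext i v w
  apply propext
  constructor
  · rintro h ⟨hi, j, hj, hij⟩
    have := h j hij v (fun k => if k < i then w k else v k) (fun _ _ => rfl)
      (fun _ hk => if_pos hk) (fun _ hik _ => (if_neg (not_lt.2 hik)).symm) hj
    simpa [Fin.pos_iff_ne_zero.2 hi] using this
  · intro h j hij v' w' hv hw hvw hj
    by_cases hi : i = 0
    · subst hi
      exact hvw 0 le_rfl (Fin.pos_iff_ne_zero.2 (ne_of_mem_of_not_mem hj hS))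
    · have hi0 : (0 : Fin 3) < i := Fin.pos_iff_ne_zero.2 hi
      rw [hv 0 hi0, hw 0 hi0]
      exact h ⟨hi, j, hj, hij⟩

/-- `y i a` is the conditional pmf of `xᵢ` given `x_1 = a`; for `i = 0` the argument `a` is a
dummy, which the constancy condition makes harmless when `0 ∉ S`. -/
def FactorsThroughFirst (S : Set (Fin 3)) (P : (Fin 3 → Bool) → ℝ) : Prop :=
  ∃ y : Fin 3 → Bool → Bool → ℝ, (∀ i a b, 0 < y i a b) ∧ (∀ i a, ∑ b, y i a b = 1) ∧
    (∀ i ∉ S, ∀ a a', y i a = y i a') ∧ ∀ x, P x = ∏ i, y i (x 0) (x i)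

theorem memModel_stagingByFirst_iff {S : Set (Fin 3)} {P : (Fin 3 → Bool) → ℝ} :
    memModel (stagingByFirst S) P ↔
      (∀ x, 0 < P x) ∧ ∑ x, P x = 1 ∧ FactorsThroughFirst S P := by
  refine Iff.and Iff.rfl (Iff.and Iff.rfl ⟨?_, ?_⟩)
  · rintro ⟨y, ypos, ysum, yconst, yfac⟩
    refine ⟨fun i a => y i fun _ => a, fun _ _ _ => ypos _ _ _, fun _ _ => ysum _ _,
      fun i hi _ _ => yconst i _ _ fun h => absurd h hi, fun x => ?_⟩
    rw [yfac x]
    exact Finset.prod_congr rfl fun i _ => congrFun (yconst i x (fun _ => x 0) fun _ => rfl) (x i)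
  · rintro ⟨y, ypos, ysum, yconst, yfac⟩
    refine ⟨fun i v => y i (v 0), fun _ _ _ => ypos _ _ _, fun _ _ => ysum _ _,
      fun i v w hvw => ?_, yfac⟩
    by_cases hi : i ∈ S
    · exact congrArg (y i) (hvw hi)
    · exact yconst i hi _ _

theorem FactorsThroughFirst.comp_perm {S : Set (Fin 3)} {P : (Fin 3 → Bool) → ℝ}
    (h : FactorsThroughFirst S P) {σ : Equiv.Perm (Fin 3)} (hσ : σ 0 = 0) :
    FactorsThroughFirst (σ.symm ⁻¹' S) fun u => P (u ∘ σ) := by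
  obtain ⟨y, ypos, ysum, yconst, yfac⟩ := h
  refine ⟨fun j => y (σ.symm j), fun _ _ _ => ypos _ _ _, fun _ _ => ysum _ _,
    fun j hj => yconst _ hj, fun u => ?_⟩
  show P (u ∘ σ) = _
  rw [yfac, ← Equiv.prod_comp σ fun j => y (σ.symm j) (u 0) (u j)]
  simp [hσ]

theorem factorsThroughFirst_comp_perm_iff {S : Set (Fin 3)} {P : (Fin 3 → Bool) → ℝ}
    {σ : Equiv.Perm (Fin 3)} (hσ : σ 0 = 0) :
    FactorsThroughFirst S (fun u => P (u ∘ σ)) ↔ FactorsThroughFirst (σ ⁻¹' S) P := by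
  refine ⟨fun h => ?_, fun h => ?_⟩
  · have hσ' : σ.symm 0 = 0 := by rw [Equiv.symm_apply_eq, hσ]
    simpa [Function.comp_assoc] using h.comp_perm hσ'
  · simpa using h.comp_perm hσ

theorem memModel_stagingByFirst_comp_perm_iff {S : Set (Fin 3)} {P : (Fin 3 → Bool) → ℝ}
    {σ : Equiv.Perm (Fin 3)} (hσ : σ 0 = 0) :
    memModel (stagingByFirst S) (fun u => P (u ∘ σ)) ↔
      memModel (stagingByFirst (σ ⁻¹' S)) P := by
  let e : (Fin 3 → Bool) ≃ (Fin 3 → Bool) := σ.symm.arrowCongr (Equiv.refl Bool)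
  have he : ∀ u, e u = u ∘ σ := fun _ => rfl
  rw [memModel_stagingByFirst_iff, memModel_stagingByFirst_iff,
    ← factorsThroughFirst_comp_perm_iff hσ]
  simp only [← he, e.sum_comp, e.forall_congr_right (q := fun x => 0 < P x)]

theorem sum_fin_three_bool (f : (Fin 3 → Bool) → ℝ) :
    ∑ x, f x = ∑ a, ∑ b, ∑ c, f ![a, b, c] := by
  simp only [← (Fin.consEquiv fun _ => Bool).sum_comp, Fintype.sum_prod_type, Fintype.sum_unique]
  rfl

theorem vecCons_eta_three (x : Fin 3 → Bool) : ![x 0, x 1, x 2] = x := by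
  funext i; fin_cases i <;> rfl

theorem prod_vecCons_three (y : Fin 3 → Bool → Bool → ℝ) (a b c : Bool) :
    ∏ i, y i (![a, b, c] 0) (![a, b, c] i) = y 0 a a * y 1 a b * y 2 a c := by
  simp [Fin.prod_univ_three]

theorem condIndep_identity_of_eq_mul {P : (Fin 3 → Bool) → ℝ} {f : Bool → ℝ}
    {g h : Bool → Bool → ℝ} (hP : ∀ a b c, P ![a, b, c] = f a * g a b * h a c)
    (v : Fin 3 → Bool) :
    P v * (∑ b : Bool, ∑ c : Bool, P ![v 0, b, c]) =
      (∑ c : Bool, P ![v 0, v 1, c]) * (∑ b : Bool, P ![v 0, b, v 2]) := by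
  rw [← vecCons_eta_three v]
  simp only [hP, Fintype.sum_bool, Matrix.cons_val_zero, Matrix.cons_val_one,
    Matrix.cons_val_two, Matrix.head_cons, Matrix.tail_cons]
  ring

theorem sum_div_sum_eq_one {ι : Type*} [Fintype ι] {f : ι → ℝ} (hf : ∑ i, f i ≠ 0) :
    ∑ i, f i / ∑ j, f j = 1 := by
  rw [← Finset.sum_div, div_self hf]

theorem factorsThroughFirst_of_condIndep {P : (Fin 3 → Bool) → ℝ} (hpos : ∀ x, 0 < P x)
    (hsum : ∑ x, P x = 1) (hci : ∀ v : Fin 3 → Bool,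
      P v * (∑ b : Bool, ∑ c : Bool, P ![v 0, b, c]) =
        (∑ c : Bool, P ![v 0, v 1, c]) * (∑ b : Bool, P ![v 0, b, v 2])) :
    FactorsThroughFirst {1, 2} P := by
  have sum_pos : ∀ f : Bool → ℝ, (∀ b, 0 < f b) → 0 < ∑ b, f b :=
    fun f hf => Finset.sum_pos (fun b _ => hf b) Finset.univ_nonempty
  let m : Bool → ℝ := fun a => ∑ b, ∑ c, P ![a, b, c]
  have mpos : ∀ a, 0 < m a := fun a => sum_pos _ fun _ => sum_pos _ fun _ => hpos _
  -- unnormalized conditionals: the marginals of `X_1`, `(X_1, X_2)` and `(X_1, X_3)`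
  let F : Fin 3 → Bool → Bool → ℝ :=
    ![fun _ => m, fun a b => ∑ c, P ![a, b, c], fun a c => ∑ b, P ![a, b, c]]
  have Fpos : ∀ i a b, 0 < F i a b := by
    intro i a b
    fin_cases i
    · exact mpos b
    · exact show 0 < ∑ c, P ![a, b, c] from sum_pos _ fun _ => hpos _
    · exact show 0 < ∑ b', P ![a, b', b] from sum_pos _ fun _ => hpos _
  have hF0 : ∀ a, ∑ b, F 0 a b = 1 := fun _ => (sum_fin_three_bool P).symm.trans hsum
  have hF1 : ∀ a, ∑ b, F 1 a b = m a := fun _ => rfl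
  have hF2 : ∀ a, ∑ b, F 2 a b = m a := fun a =>
    show ∑ c, ∑ b, P ![a, b, c] = ∑ b, ∑ c, P ![a, b, c] from Finset.sum_comm
  refine ⟨fun i a b => F i a b / ∑ b', F i a b', fun i a b => div_pos (Fpos i a b)
    (sum_pos _ (Fpos i a)), fun i a => sum_div_sum_eq_one (sum_pos _ (Fpos i a)).ne',
    fun i hi a a' => ?_, fun x => ?_⟩
  · fin_cases i
    · rfl
    all_goals simp at hi
  · rw [Fin.prod_univ_three]
    dsimp only
    rw [hF0, hF1, hF2]
    have := mpos (x 0)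
    simp only [F, Matrix.cons_val_zero, Matrix.cons_val_one, Matrix.cons_val_two,
      Matrix.head_cons, Matrix.tail_cons]
    field_simp
    linear_combination hci x

theorem memModel_stagingByFirst_one_two_iff {P : (Fin 3 → Bool) → ℝ} :
    memModel (stagingByFirst {1, 2}) P ↔ condIndep23given1 P := by
  rw [memModel_stagingByFirst_iff]
  constructor
  · rintro ⟨hpos, hsum, y, -, -, -, hfac⟩
    exact ⟨hpos, hsum, condIndep_identity_of_eq_mul fun a b c => by
      rw [hfac, prod_vecCons_three]⟩
  · rintro ⟨hpos, hsum, hci⟩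
    exact ⟨hpos, hsum, factorsThroughFirst_of_condIndep hpos hsum hci⟩

theorem FactorsThroughFirst.mul_swap_third {P : (Fin 3 → Bool) → ℝ}
    (h : FactorsThroughFirst {1} P) (a b c a' b' c' : Bool) :
    P ![a, b, c] * P ![a', b', c'] = P ![a, b, c'] * P ![a', b', c] := by
  obtain ⟨y, -, -, yconst, yfac⟩ := h
  have hy2 : ∀ a, y 2 a = y 2 false := fun a => yconst 2 (by simp) a false
  simp only [yfac, prod_vecCons_three, hy2]
  ring

theorem vecCons_swap (u : Fin 3 → Bool) : ![u 0, u 2, u 1] = u ∘ Equiv.swap 1 2 := by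
  funext i; fin_cases i <;> rfl

theorem memModel_relB_swap_iff (P : (Fin 3 → Bool) → ℝ) :
    memModel relB (fun u => P ![u 0, u 2, u 1]) ↔ memModel relA P := by
  have hS : Equiv.swap (1 : Fin 3) 2 ⁻¹' {2} = {1} := by
    ext i; fin_cases i <;> simp [Equiv.swap_apply_def]
  simp only [vecCons_swap]
  exact (memModel_stagingByFirst_comp_perm_iff (S := {2}) rfl).trans (by rw [hS]; rfl)

theorem memModel_samePos_relB_swap_iff (P : (Fin 3 → Bool) → ℝ) :
    memModel (samePos relB) (fun u => P ![u 0, u 2, u 1]) ↔ condIndep23given1 P := by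
  have hdown : {i : Fin 3 | i ≠ 0 ∧ ∃ j ∈ ({2} : Set (Fin 3)), i ≤ j} = {1, 2} := by
    ext i; fin_cases i <;> simp
  have hS : Equiv.swap (1 : Fin 3) 2 ⁻¹' {1, 2} = {1, 2} := by
    ext i; fin_cases i <;> simp [Equiv.swap_apply_def]
  rw [show relB = stagingByFirst {2} from rfl, samePos_stagingByFirst (by simp), hdown]
  simp only [vecCons_swap]
  rw [memModel_stagingByFirst_comp_perm_iff rfl, hS, memModel_stagingByFirst_one_two_iff]

theorem samePos_relA : samePos relA = relA := by
  have hdown : {i : Fin 3 | i ≠ 0 ∧ ∃ j ∈ ({1} : Set (Fin 3)), i ≤ j} = {1} := by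
    ext i; fin_cases i <;> simp
  exact (samePos_stagingByFirst (S := {1}) (by simp)).trans (by rw [hdown]; rfl)

/-- `X_1, X_2` independent and uniform, and `X_3 = X_1` with probability `3/4`. -/
noncomputable def copyFirstPmf : (Fin 3 → Bool) → ℝ :=
  fun x => if x 0 = x 2 then 3 / 16 else 1 / 16

theorem condIndep23given1_copyFirstPmf : condIndep23given1 copyFirstPmf := by
  refine ⟨fun x => ?_, ?_, condIndep_identity_of_eq_mul
    (f := fun _ => 1 / 2) (g := fun _ _ => 1 / 2)
    (h := fun a c => if a = c then 3 / 4 else 1 / 4) fun a b c => ?_⟩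
  · unfold copyFirstPmf; split_ifs <;> norm_num
  · norm_num [sum_fin_three_bool, copyFirstPmf, Matrix.cons_val_two, Matrix.tail_cons,
      Matrix.head_cons]
  · simp only [copyFirstPmf, Matrix.cons_val_zero, Matrix.cons_val_two, Matrix.tail_cons,
      Matrix.head_cons]
    split_ifs <;> norm_num

theorem not_memModel_relA_copyFirstPmf : ¬ memModel relA copyFirstPmf := by
  intro h
  have := ((memModel_stagingByFirst_iff.1 h).2.2.mul_swap_third) false false false true false true
  norm_num [copyFirstPmf, Matrix.cons_val_two, Matrix.tail_cons, Matrix.head_cons] at this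

/--
**Remark 2.**
The stagings `~` (`relA`, order `(X_1, X_2, X_3)`, simple) and `~'` (`relB`, order
`(X_1, X_3, X_2)`) induce the same model of joint distributions of
`(X_1, X_2, X_3)`; however, the models of their simplifications differ: the
position staging `≈` of `~` satisfies `M(≈) = M(~)`, while the position staging
`≈'` of `~'` induces the model of strictly positive `P` with `X_2 ⫫ X_3 | X_1`,
which strictly contains `M(~)`.  Hence two equivalent staged trees can have
non-equivalent simplified staged trees.
-/
theorem equivalent_trees_nonequivalent_simplifications :
    (∀ P : (Fin 3 → Bool) → ℝ,
        memModel relB (fun u => P ![u 0, u 2, u 1]) ↔ memModel relA P) ∧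
      (∀ P : (Fin 3 → Bool) → ℝ,
        memModel (samePos relA) P ↔ memModel relA P) ∧
      (∀ P : (Fin 3 → Bool) → ℝ,
        memModel (samePos relB) (fun u => P ![u 0, u 2, u 1]) ↔
          condIndep23given1 P) ∧
      (∀ P : (Fin 3 → Bool) → ℝ,
        memModel relA P → memModel (samePos relB) (fun u => P ![u 0, u 2, u 1])) ∧
      (∃ P : (Fin 3 → Bool) → ℝ,
        memModel (samePos relB) (fun u => P ![u 0, u 2, u 1]) ∧ ¬ memModel relA P) :=
  ⟨memModel_relB_swap_iff, fun P => by rw [samePos_relA], memModel_samePos_relB_swap_iff,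
    fun P h => memModel_samePos ((memModel_relB_swap_iff P).2 h),
    copyFirstPmf, (memModel_samePos_relB_swap_iff _).2 condIndep23given1_copyFirstPmf,
    not_memModel_relA_copyFirstPmf⟩
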